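/- arXiv:2302.03260 — 4 statements merged into one kernel-verified Lean document; each statement's English description precedes it below -/
import Mathlib

section
/- Let G = Z₂ × Z₄ and θ a normalized orthomorphism of G. Define A₄₄ = {x ∈ G : o(x)=4 and o(θ(x))=4}, A₄₂ = {x : o(x)=4, o(θ(x))=2}, A₂₄ = {x : o(x)=2, o(θ(x))=4}, A₂₂ = {x : o(x)=2, o(θ(x))=2}. Then |A₄₄| = |A₄₂| = |A₂₄| = 2 and |A₂₂| = 1. -/
/-- The group `ℤ₂ × ℤ₄` (written additively). -/
abbrev G24 : Type := ZMod 2 × ZMod 4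

/-- A normalized orthomorphism: a bijection fixing the identity whose associated
complete mapping `x ↦ -x + θ x` (i.e. `x⁻¹θ(x)` in additive notation) is a bijection. -/
def IsNormOrtho (θ : G24 → G24) : Prop :=
  Function.Bijective θ ∧ θ 0 = 0 ∧ Function.Bijective (fun x => -x + θ x)

/-- Orthogonality of orthomorphisms: `x ↦ θ₁(x)⁻¹θ₂(x)` is a bijection. -/
def Orthogonal (θ₁ θ₂ : G24 → G24) : Prop :=
  Function.Bijective (fun x => -θ₁ x + θ₂ x)

/-- `A i j θ = {x : order of x is i and order of θ(x) is j}`. -/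
def A (i j : ℕ) (θ : G24 → G24) : Set G24 :=
  {x | addOrderOf x = i ∧ addOrderOf (θ x) = j}

/-!
The elements of order 4 of `ℤ₂ × ℤ₄` are those with odd second coordinate, i.e. the nontrivial
fibre of a surjective homomorphism `χ : G → ℤ₂`. Let `n i j` count the `x` with `χ x = i` and
`χ (θ x) = j`. The rows of this 2 × 2 table sum to
`|G|/2` since the fibres of `χ` do, the columns too because `θ` is a bijection, and so does the
antidiagonal because `x ↦ -x + θ x` is a bijection and `χ (-x + θ x) = χ x + χ (θ x)`. These
equations force every `n i j = |G|/4 = 2`; the four sets `A` are these classes, except that the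
identity has to be removed from the class `(0, 0)`.
-/

open Finset

lemma ZMod.eq_one_iff_ne_zero_mod_two (a : ZMod 2) : a = 1 ↔ a ≠ 0 := by
  revert a; decide

lemma card_filter_eq_zero_add_card_filter_eq_one {α : Type*} (s : Finset α) (f : α → ZMod 2) :
    #{x ∈ s | f x = 0} + #{x ∈ s | f x = 1} = #s := by
  simp only [ZMod.eq_one_iff_ne_zero_mod_two]
  exact card_filter_add_card_filter_not _

lemma card_filter_comp_of_bijective {α : Type*} [Fintype α] {σ : α → α} (hσ : σ.Bijective)
    (p : α → Prop) [DecidablePred p] : #{x | p (σ x)} = #{x | p x} :=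
  card_bijective σ hσ (by simp)

section Orthomorphism

variable {G : Type*} [AddGroup G] [Fintype G] {χ : G →+ ZMod 2}

lemma two_mul_card_fiber_of_surjective (hχ : Function.Surjective χ) (i : ZMod 2) :
    2 * #{x | χ x = i} = Fintype.card G := by
  obtain ⟨g, hg⟩ := hχ 1
  have hswap : #{x | χ x = 0} = #{x | χ x = 1} :=
    card_bijective (· + g) (Equiv.addRight g).bijective (by simp [hg])
  have hsum := card_filter_eq_zero_add_card_filter_eq_one univ χ
  rw [card_univ] at hsum
  fin_cases i <;> simp only [Fin.zero_eta, Fin.mk_one] <;> omega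

theorem four_mul_card_fiber_of_orthomorphism (hχ : Function.Surjective χ) {θ : G → G}
    (hθ : θ.Bijective) (hη : Function.Bijective fun x => -x + θ x) (i j : ZMod 2) :
    4 * #{x | χ x = i ∧ χ (θ x) = j} = Fintype.card G := by
  have row (i : ZMod 2) :
      #{x | χ x = i ∧ χ (θ x) = 0} + #{x | χ x = i ∧ χ (θ x) = 1} = #{x | χ x = i} := by
    simpa only [filter_filter] using
      card_filter_eq_zero_add_card_filter_eq_one {x | χ x = i} (fun x => χ (θ x))
  have col (j : ZMod 2) :
      #{x | χ x = 0 ∧ χ (θ x) = j} + #{x | χ x = 1 ∧ χ (θ x) = j} = #{x | χ x = j} := by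
    rw [← card_filter_comp_of_bijective hθ (χ · = j)]
    simpa only [filter_filter, and_comm] using
      card_filter_eq_zero_add_card_filter_eq_one {x | χ (θ x) = j} χ
  have diag :
      #{x | χ x = 0 ∧ χ (θ x) = 1} + #{x | χ x = 1 ∧ χ (θ x) = 0} = #{x | χ x = 1} := by
    have hxor (a b : ZMod 2) : (-a + b = 1 ∧ a = 0 ↔ a = 0 ∧ b = 1) ∧
        (-a + b = 1 ∧ a = 1 ↔ a = 1 ∧ b = 0) := by
      revert a b; decide
    have hsplit := card_filter_eq_zero_add_card_filter_eq_one {x | χ (-x + θ x) = 1} χ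
    rw [filter_filter, filter_filter, card_filter_comp_of_bijective hη (χ · = 1)] at hsplit
    simpa only [map_add, map_neg, hxor] using hsplit
  have fiber := two_mul_card_fiber_of_surjective hχ
  have := row 0; have := row 1; have := col 0; have := col 1
  have := fiber 0; have := fiber 1
  fin_cases i <;> fin_cases j <;> simp only [Fin.zero_eta, Fin.mk_one] <;> omega

end Orthomorphism

namespace G24

def parity : G24 →+ ZMod 2 :=
  (ZMod.castHom (show 2 ∣ 4 by norm_num) (ZMod 2)).toAddMonoidHom.comp (AddMonoidHom.snd _ _)

lemma parity_surjective : Function.Surjective parity := by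
  intro i
  fin_cases i
  exacts [⟨0, rfl⟩, ⟨(0, 1), rfl⟩]

lemma addOrderOf_eq (x : G24) :
    addOrderOf x = if x = 0 then 1 else if parity x = 1 then 4 else 2 := by
  fin_cases x <;> exact (addOrderOf_eq_iff (by decide)).2 (by decide)

lemma addOrderOf_eq_four_iff (x : G24) : addOrderOf x = 4 ↔ parity x = 1 := by
  rw [addOrderOf_eq]
  split_ifs with h0 h1 <;> simp_all

lemma addOrderOf_eq_two_iff (x : G24) : addOrderOf x = 2 ↔ x ≠ 0 ∧ parity x = 0 := by
  rw [addOrderOf_eq]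
  split_ifs with h0 h1 <;> simp_all [ZMod.eq_one_iff_ne_zero_mod_two]

end G24

open G24

theorem card_A_partition (θ : G24 → G24) (hθ : IsNormOrtho θ) :
    (A 4 4 θ).ncard = 2 ∧ (A 4 2 θ).ncard = 2 ∧ (A 2 4 θ).ncard = 2 ∧
      (A 2 2 θ).ncard = 1 := by
  obtain ⟨hbij, h0, hη⟩ := hθ
  have hθ_eq_zero (x : G24) : θ x = 0 ↔ x = 0 := hbij.injective.eq_iff' h0
  have hfiber (i j : ZMod 2) : #{x | parity x = i ∧ parity (θ x) = j} = 2 := by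
    have := four_mul_card_fiber_of_orthomorphism parity_surjective hbij hη i j
    rw [show Fintype.card G24 = 8 from rfl] at this
    omega
  have h44 : A 4 4 θ = ↑({x | parity x = 1 ∧ parity (θ x) = 1} : Finset G24) := by
    ext x; simp [A, addOrderOf_eq_four_iff]
  have h42 : A 4 2 θ = ↑({x | parity x = 1 ∧ parity (θ x) = 0} : Finset G24) := by
    ext x
    by_cases hx : x = 0 <;>
      simp [A, addOrderOf_eq_four_iff, G24.addOrderOf_eq_two_iff, hx, hθ_eq_zero]
  have h24 : A 2 4 θ = ↑({x | parity x = 0 ∧ parity (θ x) = 1} : Finset G24) := by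
    ext x
    by_cases hx : x = 0 <;> simp [A, addOrderOf_eq_four_iff, G24.addOrderOf_eq_two_iff, hx, h0]
  have h22 : A 2 2 θ = ↑(({x | parity x = 0 ∧ parity (θ x) = 0} : Finset G24).erase 0) := by
    ext x
    by_cases hx : x = 0 <;> simp [A, G24.addOrderOf_eq_two_iff, hx, hθ_eq_zero, and_comm]
  have hzero : (0 : G24) ∈ ({x | parity x = 0 ∧ parity (θ x) = 0} : Finset G24) := by
    simp [h0]
  simp only [h44, h42, h24, h22, Set.ncard_coe_finset, card_erase_of_mem hzero, hfiber]
  decide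
end

section
/- Every normalized orthomorphism θ of G = Z₂ × Z₄ has exactly one of the following forms, where x is the unique element of order 2 with o(θ(x))=2, and a ∈ A₄₄ \ θ(A₄₄): (i) the 7-cycle (a, ax, axθ(x), xθ(x), aθ(x), x, θ(x)) with xθ(x) = a²; (ii) (a, ax, axθ(x), xθ(x))(θ(x), aθ(x), x) with xθ(x) ≠ a²; (iii) (a, ax, axθ(x), x, θ(x))(aθ(x), xθ(x)) with xθ(x) ≠ a²; (iv) the 7-cycle (a, ax, axθ(x), x, θ(x), aθ(x), xθ(x)) with xθ(x) = a². -/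
theorem addOrderOf_eq_four_iff {M : Type*} [AddMonoid M] {z : M} (h4 : 4 • z = 0) :
    addOrderOf z = 4 ↔ 2 • z ≠ 0 := by
  rw [ne_eq, ← addOrderOf_dvd_iff_nsmul_eq_zero]
  have hdvd : addOrderOf z ∣ 4 := addOrderOf_dvd_of_nsmul_eq_zero h4
  have hle : addOrderOf z ≤ 4 := Nat.le_of_dvd (by norm_num) hdvd
  constructor
  · rintro h; rw [h]; norm_num
  · intro h
    interval_cases hz : addOrderOf z <;> simp_all

section

variable {G : Type*} [AddGroup G] [DecidableEq G]

/-- `graph` lists the values chosen so far; at a leaf, points missing from it are sent to `0`,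
which is harmless once `graph` covers the group. -/
def AllOrthoExtensions (P : (G → G) → Prop) : List G → List (G × G) → Prop
  | [], graph => P fun z => (graph.lookup z).getD 0
  | z :: zs, graph => ∀ v : G, v ∉ graph.map Prod.snd →
      -z + v ∉ graph.map (fun q => -q.1 + q.2) → AllOrthoExtensions P zs ((z, v) :: graph)

instance AllOrthoExtensions.decidable [Fintype G] (P : (G → G) → Prop) [DecidablePred P] :
    ∀ pts graph, Decidable (AllOrthoExtensions P pts graph)
  | [], _ => inferInstanceAs (Decidable (P _))
  | z :: zs, graph =>
    have := fun v : G => AllOrthoExtensions.decidable P zs ((z, v) :: graph)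
    inferInstanceAs (Decidable (∀ v : G, _ → _ → AllOrthoExtensions P zs ((z, v) :: graph)))

theorem AllOrthoExtensions.holds {P : (G → G) → Prop} {θ : G → G}
    (hθ : Function.Injective θ) (hη : Function.Injective fun z => -z + θ z) :
    ∀ {pts done : List G}, AllOrthoExtensions P pts (done.map fun z => (z, θ z)) →
      (pts ++ done).Nodup → (∀ z, z ∈ pts ++ done) → P θ
  | [], done, h, _, hcover => by
    have hlookup : (fun z => ((done.map fun z => (z, θ z)).lookup z).getD 0) = θ :=
      funext fun z => by rw [List.lookup_graph θ (List.nil_append done ▸ hcover z)]; rfl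
    rwa [AllOrthoExtensions, hlookup] at h
  | z :: zs, done, h, hnodup, hcover => by
    have hz : z ∉ done := fun hz => (List.nodup_cons.1 hnodup).1 (List.mem_append_right zs hz)
    refine holds hθ hη (done := z :: done) (h (θ z) ?_ ?_) ?_ ?_
    · simp only [List.map_map, List.mem_map, Function.comp_def, not_exists, not_and]
      exact fun w hw hwz => hz (hθ hwz ▸ hw)
    · simp only [List.map_map, List.mem_map, Function.comp_def, not_exists, not_and]
      exact fun w hw hwz => hz (hη hwz ▸ hw)
    · exact List.perm_middle.symm.nodup_iff.1 hnodup
    · exact fun w => List.perm_middle.symm.mem_iff.1 (hcover w)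

end

def ClassificationForms (θ : G24 → G24) (x a : G24) : Prop :=
    (x + θ x = a + a ∧ θ = fun z =>
      if z = a then a + x
      else if z = a + x then a + x + θ x
      else if z = a + x + θ x then x + θ x
      else if z = x + θ x then a + θ x
      else if z = a + θ x then x
      else if z = x then θ x
      else if z = θ x then a
      else z) ∨
    (x + θ x ≠ a + a ∧ θ = fun z =>
      if z = a then a + x
      else if z = a + x then a + x + θ x
      else if z = a + x + θ x then x + θ x
      else if z = x + θ x then a
      else if z = θ x then a + θ x
      else if z = a + θ x then x
      else if z = x then θ x
      else z) ∨
    (x + θ x ≠ a + a ∧ θ = fun z =>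
      if z = a then a + x
      else if z = a + x then a + x + θ x
      else if z = a + x + θ x then x
      else if z = x then θ x
      else if z = θ x then a
      else if z = a + θ x then x + θ x
      else if z = x + θ x then a + θ x
      else z) ∨
    (x + θ x = a + a ∧ θ = fun z =>
      if z = a then a + x
      else if z = a + x then a + x + θ x
      else if z = a + x + θ x then x
      else if z = x then θ x
      else if z = θ x then a + θ x
      else if z = a + θ x then x + θ x
      else if z = x + θ x then a
      else z)

theorem g24_addOrderOf_eq_four_iff (z : G24) : addOrderOf z = 4 ↔ 2 • z ≠ 0 :=
  addOrderOf_eq_four_iff (by revert z; decide)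

def g24Nonzero : List G24 := [(1, 0), (0, 2), (1, 2), (0, 1), (0, 3), (1, 1), (1, 3)]

theorem allOrthoExtensions_classificationForms :
    AllOrthoExtensions (fun θ : G24 → G24 => ∀ x a : G24, 2 • x = 0 → x ≠ 0 → 2 • θ x = 0 →
      2 • a ≠ 0 → 2 • θ a ≠ 0 → (∀ z, 2 • z ≠ 0 → θ z ≠ a) → ClassificationForms θ x a)
      g24Nonzero [(0, 0)] := by
  unfold ClassificationForms
  decide +kernel

/-- Every normalized orthomorphism of `ℤ₂ × ℤ₄` has exactly one of four forms
(the four disjuncts are mutually exclusive). Here `x` is the unique element of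
`A₂₂` and `a ∈ A₄₄ \ θ(A₄₄)`. -/
theorem orth_classification (θ : G24 → G24) (hθ : IsNormOrtho θ) (x a : G24)
    (hx : A 2 2 θ = {x}) (ha : a ∈ A 4 4 θ \ θ '' A 4 4 θ) :
    (x + θ x = a + a ∧ θ = fun z =>
      if z = a then a + x
      else if z = a + x then a + x + θ x
      else if z = a + x + θ x then x + θ x
      else if z = x + θ x then a + θ x
      else if z = a + θ x then x
      else if z = x then θ x
      else if z = θ x then a
      else z) ∨
    (x + θ x ≠ a + a ∧ θ = fun z =>
      if z = a then a + x
      else if z = a + x then a + x + θ x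
      else if z = a + x + θ x then x + θ x
      else if z = x + θ x then a
      else if z = θ x then a + θ x
      else if z = a + θ x then x
      else if z = x then θ x
      else z) ∨
    (x + θ x ≠ a + a ∧ θ = fun z =>
      if z = a then a + x
      else if z = a + x then a + x + θ x
      else if z = a + x + θ x then x
      else if z = x then θ x
      else if z = θ x then a
      else if z = a + θ x then x + θ x
      else if z = x + θ x then a + θ x
      else z) ∨
    (x + θ x = a + a ∧ θ = fun z =>
      if z = a then a + x
      else if z = a + x then a + x + θ x
      else if z = a + x + θ x then x
      else if z = x then θ x
      else if z = θ x then a + θ x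
      else if z = a + θ x then x + θ x
      else if z = x + θ x then a
      else z) := by
  obtain ⟨⟨hinj, -⟩, h0, hη, -⟩ := hθ
  obtain ⟨hx_ord, hθx_ord⟩ : x ∈ A 2 2 θ := hx ▸ rfl
  obtain ⟨⟨ha_ord, hθa_ord⟩, ha_not_image⟩ := ha
  have hsearch := allOrthoExtensions_classificationForms
  rw [show [((0, 0) : G24 × G24)] = [(0 : G24)].map (fun z => (z, θ z)) by simp [h0]] at hsearch
  exact hsearch.holds hinj hη (by decide) (by decide) x a
    (addOrderOf_eq_prime_iff.1 hx_ord).1 (addOrderOf_eq_prime_iff.1 hx_ord).2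
    (addOrderOf_eq_prime_iff.1 hθx_ord).1
    ((g24_addOrderOf_eq_four_iff a).1 ha_ord) ((g24_addOrderOf_eq_four_iff _).1 hθa_ord)
    fun z hz hza => ha_not_image ⟨z, ⟨(g24_addOrderOf_eq_four_iff z).2 hz, hza ▸ ha_ord⟩, hza⟩
end

section
/- Let G = Z₂ × Z₄ and θ₁, θ₂ normalized orthomorphisms of G with respective sets A₄₄ and A₄₄′ (elements of order 4 mapped to elements of order 4). If |A₄₄ ∩ A₄₄′| = 2, then θ₁ and θ₂ are not orthogonal. -/
open Finset

lemma eight_mul_card_all_eq_neg_one {α : Type*} [Fintype α] (a b c : α → ℤ)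
    (ha : ∀ x, a x = 1 ∨ a x = -1) (hb : ∀ x, b x = 1 ∨ b x = -1)
    (hc : ∀ x, c x = 1 ∨ c x = -1)
    (sa : ∑ x, a x = 0) (sb : ∑ x, b x = 0) (sc : ∑ x, c x = 0)
    (sab : ∑ x, a x * b x = 0) (sac : ∑ x, a x * c x = 0) (sbc : ∑ x, b x * c x = 0) :
    8 * (#{x | a x = -1 ∧ b x = -1 ∧ c x = -1} : ℤ)
      = Fintype.card α - ∑ x, a x * b x * c x := by
  have indicator : ∀ x, 8 * (if a x = -1 ∧ b x = -1 ∧ c x = -1 then 1 else 0 : ℤ)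
      = 1 - a x - b x - c x + a x * b x + a x * c x + b x * c x - a x * b x * c x := by
    intro x
    rcases ha x with h | h <;> rcases hb x with h' | h' <;> rcases hc x with h'' | h'' <;>
      simp [h, h', h'']
  rw [natCast_card_filter, mul_sum, sum_congr rfl fun x _ => indicator x]
  simp only [sum_sub_distrib, sum_add_distrib, sa, sb, sc, sab, sac, sbc, sum_const, card_univ,
    nsmul_eq_mul, mul_one]
  ring

lemma four_mul_card_all_eq_neg_one_lt {α : Type*} [Fintype α] (a b c : α → ℤ)
    (ha : ∀ x, a x = 1 ∨ a x = -1) (hb : ∀ x, b x = 1 ∨ b x = -1)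
    (hc : ∀ x, c x = 1 ∨ c x = -1)
    (sa : ∑ x, a x = 0) (sb : ∑ x, b x = 0) (sc : ∑ x, c x = 0)
    (sab : ∑ x, a x * b x = 0) (sac : ∑ x, a x * c x = 0) (sbc : ∑ x, b x * c x = 0)
    {x₀ : α} (h₀ : a x₀ = 1 ∧ b x₀ = 1 ∧ c x₀ = 1) :
    4 * #{x | a x = -1 ∧ b x = -1 ∧ c x = -1} < Fintype.card α := by
  have count := eight_mul_card_all_eq_neg_one a b c ha hb hc sa sb sc sab sac sbc
  have lower : ∑ _x : α, (-1 : ℤ) < ∑ x, a x * b x * c x := by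
    refine sum_lt_sum (fun x _ => ?_) ⟨x₀, mem_univ _, by simp [h₀]⟩
    rcases ha x with h | h <;> rcases hb x with h' | h' <;> rcases hc x with h'' | h'' <;>
      simp [h, h', h'']
  simp only [sum_const, card_univ, nsmul_eq_mul, mul_neg, mul_one] at lower
  omega

def parityChar (x : G24) : ℤ := (-1) ^ x.2.val

lemma parityChar_neg_add : ∀ x y : G24, parityChar (-x + y) = parityChar x * parityChar y := by
  decide

lemma parityChar_eq_one_or_neg_one : ∀ x : G24, parityChar x = 1 ∨ parityChar x = -1 := by
  decide

lemma two_nsmul_eq_zero_iff_parityChar : ∀ x : G24, 2 • x = 0 ↔ parityChar x = 1 := by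
  decide

lemma addOrderOf_eq_four_iff_s12 (x : G24) : addOrderOf x = 4 ↔ parityChar x = -1 := by
  have four_nsmul : 2 ^ (1 + 1) • x = 0 := by revert x; decide
  rcases parityChar_eq_one_or_neg_one x with h | h
  · have hdvd := addOrderOf_dvd_of_nsmul_eq_zero ((two_nsmul_eq_zero_iff_parityChar x).2 h)
    have hne : addOrderOf x ≠ 4 := fun h4 => by rw [h4] at hdvd; norm_num at hdvd
    simp [h, hne]
  · have hnot : ¬ 2 ^ 1 • x = 0 := by
      rw [pow_one, two_nsmul_eq_zero_iff_parityChar, h]; norm_num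
    simpa [h] using addOrderOf_eq_prime_pow hnot four_nsmul

lemma sum_parityChar_comp {f : G24 → G24} (hf : Function.Bijective f) :
    ∑ x, parityChar (f x) = 0 := by
  rw [hf.sum_comp parityChar]; decide

lemma sum_parityChar_mul_parityChar {f g : G24 → G24}
    (hfg : Function.Bijective fun x => -f x + g x) :
    ∑ x, parityChar (f x) * parityChar (g x) = 0 := by
  simpa only [parityChar_neg_add] using sum_parityChar_comp hfg

lemma sum_parityChar_mul_of_isNormOrtho {θ : G24 → G24} (hθ : IsNormOrtho θ) :
    ∑ x, parityChar x * parityChar (θ x) = 0 :=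
  sum_parityChar_mul_parityChar (f := id) hθ.2.2

lemma A44_inter_eq (θ₁ θ₂ : G24 → G24) :
    A 4 4 θ₁ ∩ A 4 4 θ₂ = ↑(univ.filter fun x : G24 =>
      parityChar x = -1 ∧ parityChar (θ₁ x) = -1 ∧ parityChar (θ₂ x) = -1) := by
  ext x
  simp only [A, Set.mem_inter_iff, Set.mem_ofPred_eq, coe_filter, mem_univ, true_and,
    addOrderOf_eq_four_iff_s12]
  tauto

theorem not_orth_of_A44_inter_two (θ₁ θ₂ : G24 → G24)
    (h₁ : IsNormOrtho θ₁) (h₂ : IsNormOrtho θ₂)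
    (h : (A 4 4 θ₁ ∩ A 4 4 θ₂).ncard = 2) : ¬ Orthogonal θ₁ θ₂ := by
  intro ho
  rw [A44_inter_eq, Set.ncard_coe_finset] at h
  have lt := four_mul_card_all_eq_neg_one_lt parityChar
    (fun x => parityChar (θ₁ x)) (fun x => parityChar (θ₂ x))
    parityChar_eq_one_or_neg_one (fun x => parityChar_eq_one_or_neg_one (θ₁ x))
    (fun x => parityChar_eq_one_or_neg_one (θ₂ x)) (sum_parityChar_comp Function.bijective_id)
    (sum_parityChar_comp h₁.1) (sum_parityChar_comp h₂.1) (sum_parityChar_mul_of_isNormOrtho h₁)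
    (sum_parityChar_mul_of_isNormOrtho h₂) (sum_parityChar_mul_parityChar ho)
    (x₀ := 0) (by simp only [h₁.2.1, h₂.2.1]; decide)
  rw [h] at lt
  exact absurd lt (by decide)
end

section
/- Every normalized orthomorphism of G = Z₂ × Z₄ is orthogonal to exactly two other normalized orthomorphisms of G. -/
/-! A normalized orthomorphism `θ` of `ℤ₂ × ℤ₄` is determined by its table of values on the
seven nonzero elements, which must be a permutation of them. Bijectivity of a self-map of a
finite set is the absence of repetitions in its table, so both the orthomorphism condition and
orthogonality become conditions on tables that the kernel can decide. Running through the
`7! = 5040` permutations leaves 48 normalized orthomorphisms, and each is orthogonal to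
exactly two of the others. -/

namespace List

variable {α β : Type*}

theorem bijective_iff_nodup_map [Finite α] {l : List α} (hl : l.Nodup) (hmem : ∀ x, x ∈ l)
    {f : α → α} : Function.Bijective f ↔ (l.map f).Nodup := by
  rw [← Finite.injective_iff_bijective, nodup_map_iff_inj_on hl]
  simp only [Function.Injective, hmem, true_implies]

theorem perm_iff_nodup_of_length_eq {l m : List α} (hl : l.Nodup) (hmem : ∀ x, x ∈ l)
    (hlen : m.length = l.length) : m ~ l ↔ m.Nodup :=
  ⟨fun h => h.nodup_iff.2 hl,
    fun hm => (subperm_of_subset hm fun x _ => hmem x).perm_of_length_le hlen.ge⟩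

theorem map_getD_idxOf [DecidableEq α] {l : List α} (hl : l.Nodup) {s : List β}
    (hs : s.length = l.length) (d : β) : l.map (fun x => s.getD (l.idxOf x) d) = s := by
  refine ext_getElem (by simp [hs]) fun i _ hi => ?_
  simp [hl.idxOf_getElem, getD_eq_getElem?_getD, getElem?_eq_getElem hi]

end List

namespace G24

def nonzeroElems : List G24 := [(0,1), (0,2), (0,3), (1,0), (1,1), (1,2), (1,3)]

def elems : List G24 := 0 :: nonzeroElems

theorem nodup_elems : elems.Nodup := by decide

theorem mem_elems (x : G24) : x ∈ elems := by
  revert x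
  decide

def table (f : G24 → G24) : List G24 := elems.map f

theorem table_injective : Function.Injective table :=
  fun _ _ h => funext fun x => List.map_inj_left.1 h x (mem_elems x)

theorem mem_range_table {s : List G24} (hs : s.length = elems.length) :
    s ∈ Set.range table :=
  ⟨fun x => s.getD (elems.idxOf x) 0, List.map_getD_idxOf nodup_elems hs 0⟩

theorem elems_eq_table_id : elems = table id := (List.map_id _).symm

theorem bijective_iff_nodup_table {f : G24 → G24} : Function.Bijective f ↔ (table f).Nodup :=
  List.bijective_iff_nodup_map nodup_elems mem_elems

def negAddTable (t s : List G24) : List G24 := List.zipWith (fun a b => -a + b) t s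

theorem table_neg_add (f g : G24 → G24) :
    table (fun x => -f x + g x) = negAddTable (table f) (table g) := by
  simp only [table, negAddTable, List.zipWith_map, List.zipWith_self]

theorem orthogonal_iff_nodup {f g : G24 → G24} :
    Orthogonal f g ↔ (negAddTable (table f) (table g)).Nodup := by
  rw [Orthogonal, bijective_iff_nodup_table, table_neg_add]

def normOrthoTables : List (List G24) :=
  (nonzeroElems.permutations'.map (List.cons 0)).filter fun t => (negAddTable elems t).Nodup

theorem isNormOrtho_iff_table_mem {f : G24 → G24} :
    IsNormOrtho f ↔ table f ∈ normOrthoTables := by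
  have hcons : table f = f 0 :: nonzeroElems.map f := rfl
  have hdiff : table (fun x => -x + f x) = negAddTable elems (table f) := by
    rw [elems_eq_table_id]
    exact table_neg_add id f
  have hbij : f 0 = 0 → (Function.Bijective f ↔ (nonzeroElems.map f).Perm nonzeroElems) := by
    intro h0
    rw [bijective_iff_nodup_table, table, ← List.perm_iff_nodup_of_length_eq nodup_elems mem_elems
      (List.length_map _), elems, List.map_cons, h0, List.perm_cons]
  simp only [IsNormOrtho, bijective_iff_nodup_table (f := fun x => -x + f x), hdiff,
    normOrthoTables, List.mem_filter, List.mem_map, List.mem_permutations', decide_eq_true_eq]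
  constructor
  · rintro ⟨hf, h0, hd⟩
    exact ⟨⟨_, (hbij h0).1 hf, by rw [hcons, h0]⟩, hd⟩
  · rintro ⟨⟨p, hp, hpf⟩, hd⟩
    rw [hcons, List.cons.injEq] at hpf
    exact ⟨(hbij hpf.1.symm).2 (hpf.2 ▸ hp), hpf.1.symm, hd⟩

theorem length_of_mem_normOrthoTables {t : List G24} (ht : t ∈ normOrthoTables) :
    t.length = elems.length := by
  obtain ⟨p, hp, rfl⟩ := List.mem_map.1 (List.mem_filter.1 ht).1
  simp [elems, (List.mem_permutations'.1 hp).length_eq]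

def mateTables (t : List G24) : List (List G24) :=
  normOrthoTables.filter fun s => s ≠ t ∧ (negAddTable t s).Nodup

theorem card_mateTables_eq_two : ∀ t ∈ normOrthoTables, (mateTables t).toFinset.card = 2 := by
  decide +kernel

end G24

open G24 in
/-- Every normalized orthomorphism of `ℤ₂ × ℤ₄` is orthogonal to exactly two
other normalized orthomorphisms. -/
theorem two_orthogonal_mates (θ : G24 → G24) (hθ : IsNormOrtho θ) :
    {ψ : G24 → G24 | IsNormOrtho ψ ∧ ψ ≠ θ ∧ Orthogonal θ ψ}.ncard = 2 := by
  have hmates : {ψ | IsNormOrtho ψ ∧ ψ ≠ θ ∧ Orthogonal θ ψ} =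
      table ⁻¹' (mateTables (table θ)).toFinset := by
    ext ψ
    simp [mateTables, isNormOrtho_iff_table_mem, orthogonal_iff_nodup, table_injective.ne_iff]
  have hrange : ((mateTables (table θ)).toFinset : Set (List G24)) ⊆ Set.range table :=
    fun s hs => mem_range_table <| length_of_mem_normOrthoTables
      (List.mem_filter.1 (List.mem_toFinset.1 hs)).1
  rw [hmates, Set.ncard_preimage_of_injective_subset_range table_injective hrange,
    Set.ncard_coe_finset]
  exact card_mateTables_eq_two _ (isNormOrtho_iff_table_mem.1 hθ)
end
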